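/- arXiv:1403.6039 — 10 statements merged into one kernel-verified Lean document; each statement's English description precedes it below -/
import Mathlib

section
/- There is no almost split sequence 0 → X → Y → ℚ → 0 in the category of ℤ-modules; that is, there is no short exact sequence of abelian groups ending at ℚ whose right-hand map is right almost split and whose left-hand map is left almost split. -/
/-- There is no almost split sequence `0 → X → Y → ℚ → 0` in the category of
ℤ-modules (abelian groups): no short exact sequence of abelian groups ending at `ℚ`
whose right-hand map is right almost split and whose left-hand map is left almost split. -/
theorem no_almost_split_sequence_ending_at_rat
    (X Y : Type) [AddCommGroup X] [AddCommGroup Y]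
    (f : X →+ Y) (g : Y →+ ℚ)
    -- short exact
    (hf : Function.Injective f) (hg : Function.Surjective g)
    (hexact : ∀ y : Y, g y = 0 ↔ y ∈ Set.range f)
    -- `g` is not a split epimorphism
    (hg_nsplit : ¬ ∃ s : ℚ →+ Y, g.comp s = AddMonoidHom.id ℚ)
    -- `g` is right almost split
    (_hras : ∀ (Y' : Type) [AddCommGroup Y'] (h : Y' →+ ℚ),
      (¬ ∃ s : ℚ →+ Y', h.comp s = AddMonoidHom.id ℚ) → ∃ k : Y' →+ Y, g.comp k = h)
    -- `f` is not a split monomorphism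
    (hf_nsplit : ¬ ∃ r : Y →+ X, r.comp f = AddMonoidHom.id X)
    -- `f` is left almost split
    (_hlas : ∀ (X' : Type) [AddCommGroup X'] (h : X →+ X'),
      (¬ ∃ r : X' →+ X, r.comp h = AddMonoidHom.id X) → ∃ k : Y →+ X', k.comp f = h) :
    False := by
  classical
  have hgf : ∀ x : X, g (f x) = 0 := fun x => (hexact (f x)).mpr ⟨x, rfl⟩
  by_cases hc : ∀ m : ℤ, m ≠ 0 → ∃ r : X →+ X, ∀ x : X, r (m • x) = x
  · -- Case B : every multiplication by m is a split mono.  Show X is divisible.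
    have hdvd : ∀ (m : ℤ), m ≠ 0 → ∀ x : X, ∃ y : X, m • y = x := by
      intro m hm
      obtain ⟨r, hr⟩ := hc m hm
      by_cases he : ∀ x : X, m • r x = x
      · exact fun x => ⟨r x, he x⟩
      · exfalso
        push_neg at he
        obtain ⟨x₀, hx₀⟩ := he
        set e : X →+ X := AddMonoidHom.mk' (fun x => m • r x)
          (fun a b => by show m • r (a + b) = m • r a + m • r b; rw [map_add, smul_add]) with he_def
        have hee : ∀ x, e (e x) = e x := by
          intro x
          show m • r (m • r x) = m • r x
          rw [hr (r x)]
        have hz : e (x₀ - e x₀) = 0 := by rw [map_sub, hee, sub_self]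
        have hzne : x₀ - e x₀ ≠ 0 := sub_ne_zero.mpr (fun h => hx₀ h.symm)
        have hns1 : ¬ ∃ r' : X →+ X, r'.comp e = AddMonoidHom.id X := by
          rintro ⟨r', hr'⟩
          have h1 := DFunLike.congr_fun hr' (x₀ - e x₀)
          simp only [AddMonoidHom.comp_apply, AddMonoidHom.id_apply] at h1
          rw [hz, map_zero] at h1
          exact hzne h1.symm
        obtain ⟨k₁, hk₁⟩ := _hlas X e hns1
        have hmz : m • (x₀ - e x₀) ≠ 0 := fun h => hzne (by
          have := hr (x₀ - e x₀)
          rw [h, map_zero] at this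
          exact this.symm)
        have hz2 : (AddMonoidHom.id X - e) (m • (x₀ - e x₀)) = 0 := by
          have : e (m • (x₀ - e x₀)) = m • (x₀ - e x₀) := by
            show m • r (m • (x₀ - e x₀)) = m • (x₀ - e x₀)
            rw [hr]
          simp [AddMonoidHom.sub_apply, this]
        have hns2 : ¬ ∃ r' : X →+ X,
            r'.comp (AddMonoidHom.id X - e) = AddMonoidHom.id X := by
          rintro ⟨r', hr'⟩
          have h1 := DFunLike.congr_fun hr' (m • (x₀ - e x₀))
          simp only [AddMonoidHom.comp_apply, AddMonoidHom.id_apply] at h1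
          rw [hz2, map_zero] at h1
          exact hmz h1.symm
        obtain ⟨k₂, hk₂⟩ := _hlas X (AddMonoidHom.id X - e) hns2
        apply hf_nsplit
        refine ⟨k₁ + k₂, ?_⟩
        ext x
        have h1 := DFunLike.congr_fun hk₁ x
        have h2 := DFunLike.congr_fun hk₂ x
        simp only [AddMonoidHom.comp_apply] at h1 h2
        show k₁ (f x) + k₂ (f x) = x
        rw [h1, h2]
        simp [AddMonoidHom.sub_apply]
    -- X is divisible, hence Baer, hence injective, hence f splits : contradiction.
    have baer : Module.Baer ℤ X := by
      intro I gI
      obtain ⟨a, ha⟩ : ∃ a : ℤ, I = Ideal.span {a} :=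
        ⟨Submodule.IsPrincipal.generator I,
          (Ideal.span_singleton_generator I).symm⟩
      by_cases ha0 : a = 0
      · refine ⟨0, ?_⟩
        intro x mem
        have hx0 : x = 0 := by
          have := Ideal.mem_span_singleton.mp (ha ▸ mem)
          rwa [ha0, zero_dvd_iff] at this
        have hsub : (⟨x, mem⟩ : I) = 0 := Subtype.ext hx0
        rw [hsub, map_zero]
        simp
      · have memA : a ∈ I := ha ▸ Ideal.subset_span rfl
        obtain ⟨y, hy⟩ := hdvd a ha0 (gI ⟨a, memA⟩)
        refine ⟨LinearMap.toSpanSingleton ℤ X y, ?_⟩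
        intro x mem
        obtain ⟨c, hcx⟩ := Ideal.mem_span_singleton'.mp (ha ▸ mem)
        have hsub : (⟨x, mem⟩ : I) = c • (⟨a, memA⟩ : I) := by
          apply Subtype.ext
          simp [← hcx, smul_eq_mul]
        rw [hsub, map_smul, ← hy, LinearMap.toSpanSingleton_apply, ← hcx,
          mul_smul]
    have inj : Module.Injective ℤ X := baer.injective
    obtain ⟨r, hr⟩ := inj.out f.toIntLinearMap hf LinearMap.id
    exact hf_nsplit ⟨r.toAddMonoidHom, by ext x; simpa using hr x⟩
  · -- Case A : some multiplication by m is not a split mono.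
    push_neg at hc
    obtain ⟨m, hm, hmns⟩ := hc
    set hmul : X →+ X := AddMonoidHom.mk' (fun x => m • x)
      (fun a b => smul_add m a b) with hmul_def
    have hns : ¬ ∃ r : X →+ X, r.comp hmul = AddMonoidHom.id X := by
      rintro ⟨r, hr⟩
      obtain ⟨x, hx⟩ := hmns r
      have := DFunLike.congr_fun hr x
      simp only [AddMonoidHom.comp_apply, AddMonoidHom.id_apply] at this
      exact hx this
    obtain ⟨k, hk⟩ := _hlas X hmul hns
    set u : ℚ → Y := Function.surjInv hg with hu_def
    have hu : ∀ z : ℚ, g (u z) = z := fun z => Function.surjInv_eq hg z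
    set φ : Y →+ Y := AddMonoidHom.mk' (fun y => m • y - f (k y))
      (fun a b => by
      show m • (a + b) - f (k (a + b)) = (m • a - f (k a)) + (m • b - f (k b))
      rw [smul_add, map_add, map_add]; abel) with hφ_def
    have hφf : ∀ x : X, φ (f x) = 0 := by
      intro x
      have hkf : k (f x) = m • x := DFunLike.congr_fun hk x
      show m • f x - f (k (f x)) = 0
      rw [hkf, map_zsmul, sub_self]
    have hφker : ∀ y : Y, g y = 0 → φ y = 0 := by
      intro y hy
      obtain ⟨x, rfl⟩ := (hexact y).mp hy
      exact hφf x
    have hgφ : ∀ y : Y, g (φ y) = m • g y := by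
      intro y
      show g (m • y - f (k y)) = m • g y
      rw [map_sub, map_zsmul, hgf, sub_zero]
    apply hg_nsplit
    refine ⟨AddMonoidHom.mk' (fun q => φ (u (q / m))) ?_, ?_⟩
    · intro a b
      have hw : g (u ((a + b) / m) - u (a / m) - u (b / m)) = 0 := by
        rw [map_sub, map_sub, hu, hu, hu, add_div]
        ring
      have h0 := hφker _ hw
      rw [map_sub, map_sub, sub_sub, sub_eq_zero] at h0
      exact h0
    · ext q
      show g (φ (u (q / m))) = q
      rw [hgφ, hu, zsmul_eq_mul]
      field_simp
end

section
/- If 0 → X → Y → Z → 0 is an almost split sequence of abelian groups with Z = ℚ, then X is a divisible abelian group. -/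
/-- If `0 → X → Y → ℚ → 0` is an almost split sequence of abelian groups
(i.e. a non-split short exact sequence with `Y → ℚ` right almost split and
`X → Y` left almost split), then `X` is a divisible abelian group. -/
theorem divisible_of_almost_split_sequence_ending_at_rat
    (X Y : Type) [AddCommGroup X] [AddCommGroup Y]
    (f : X →+ Y) (g : Y →+ ℚ)
    -- short exact
    (hf : Function.Injective f) (hg : Function.Surjective g)
    (hexact : ∀ y : Y, g y = 0 ↔ y ∈ Set.range f)
    -- `g` is not a split epimorphism
    (hg_nsplit : ¬ ∃ s : ℚ →+ Y, g.comp s = AddMonoidHom.id ℚ)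
    -- `g` is right almost split
    (hras : ∀ (Y' : Type) [AddCommGroup Y'] (h : Y' →+ ℚ),
      (¬ ∃ s : ℚ →+ Y', h.comp s = AddMonoidHom.id ℚ) → ∃ k : Y' →+ Y, g.comp k = h)
    -- `f` is not a split monomorphism
    (hf_nsplit : ¬ ∃ r : Y →+ X, r.comp f = AddMonoidHom.id X)
    -- `f` is left almost split
    (hlas : ∀ (X' : Type) [AddCommGroup X'] (h : X →+ X'),
      (¬ ∃ r : X' →+ X, r.comp h = AddMonoidHom.id X) → ∃ k : Y →+ X', k.comp f = h) :
    ∀ n : ℤ, n ≠ 0 → Function.Surjective (fun x : X => n • x) := by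
  intro n hn
  set h : X →+ X := AddMonoidHom.mk' (fun x => n • x) (fun a b => smul_add n a b) with hh
  by_cases hsplit : ∃ r : X →+ X, r.comp h = AddMonoidHom.id X
  · obtain ⟨r, hr⟩ := hsplit
    intro x
    refine ⟨r x, ?_⟩
    have hx := congrArg (fun φ => φ x) hr
    simp only [AddMonoidHom.comp_apply, AddMonoidHom.id_apply, hh,
      AddMonoidHom.mk'_apply] at hx
    simpa [← map_zsmul] using hx
  · obtain ⟨k, hk⟩ := hlas X h hsplit
    have hkf : ∀ x, k (f x) = n • x := by
      intro x
      have := congrArg (fun φ => φ x) hk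
      simpa [hh] using this
    set φ : Y →+ Y := AddMonoidHom.mk' (fun y => n • y - f (k y)) (by
      intro a b; simp only [smul_add, map_add]; abel) with hφ
    have hφf : ∀ x, φ (f x) = 0 := by
      intro x
      simp [hφ, hkf, map_zsmul]
    have hφker : ∀ y y', g y = g y' → φ y = φ y' := by
      intro y y' hgy
      have h0 : g (y - y') = 0 := by simp [map_sub, hgy]
      obtain ⟨x, hx⟩ := (hexact _).mp h0
      have h1 : φ (y - y') = 0 := by rw [← hx]; exact hφf x
      rw [map_sub, sub_eq_zero] at h1
      exact h1
    have hgφ : ∀ y, g (φ y) = n • g y := by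
      intro y
      have h0 : g (f (k y)) = 0 := (hexact _).mpr ⟨k y, rfl⟩
      simp [hφ, map_sub, map_zsmul, h0]
    let sv := Function.surjInv hg
    have hsv : ∀ q, g (sv q) = q := fun q => Function.surjInv_eq hg q
    set ψ : ℚ →+ Y := AddMonoidHom.mk' (fun q => φ (sv q)) (by
      intro a b
      have := hφker (sv (a + b)) (sv a + sv b) (by simp [hsv])
      simpa [map_add] using this) with hψ
    exfalso
    apply hg_nsplit
    refine ⟨ψ.comp (AddMonoidHom.mk' (fun q : ℚ => q / n) (fun a b => add_div a b n)), ?_⟩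
    ext q
    simp only [AddMonoidHom.comp_apply, AddMonoidHom.mk'_apply, AddMonoidHom.id_apply, hψ]
    rw [hgφ, hsv, zsmul_eq_mul]
    have hn' : (n : ℚ) ≠ 0 := Int.cast_ne_zero.mpr hn
    field_simp
end

section
/- Let 0 → X →α Y →β Z → 0 be an almost split sequence in an abelian category A. Then there is a ring isomorphism End(X)/rad End(X) ≅ End(Z)/rad End(Z). -/
open CategoryTheory

/-- For an almost split sequence `0 → X →α Y →β Z → 0` in an abelian category `A`,
there is a ring isomorphism `End(X)/rad End(X) ≅ End(Z)/rad End(Z)`, where `rad`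
is the Jacobson radical. -/
theorem endQuotJacobson_iso_of_almost_split
    {A : Type*} [Category A] [Abelian A]
    {X Y Z : A} (α : X ⟶ Y) (β : Y ⟶ Z)
    -- short exact
    (hmono : Mono α) (hepi : Epi β) (hcomp : α ≫ β = 0)
    (hker : ∀ (W : A) (γ : W ⟶ Y), γ ≫ β = 0 → ∃ δ : W ⟶ X, δ ≫ α = γ)
    -- `β` is not a split epimorphism
    (hβ_nsplit : ¬ ∃ s : Z ⟶ Y, s ≫ β = 𝟙 Z)
    -- `β` is right almost split
    (hras : ∀ (W : A) (γ : W ⟶ Z), (¬ ∃ s : Z ⟶ W, s ≫ γ = 𝟙 Z) →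
      ∃ δ : W ⟶ Y, δ ≫ β = γ)
    -- `α` is not a split monomorphism
    (hα_nsplit : ¬ ∃ r : Y ⟶ X, α ≫ r = 𝟙 X)
    -- `α` is left almost split
    (hlas : ∀ (W : A) (γ : X ⟶ W), (¬ ∃ r : W ⟶ X, γ ≫ r = 𝟙 X) →
      ∃ δ : Y ⟶ W, α ≫ δ = γ) :
    Nonempty
      (((⊥ : TwoSidedIdeal (End X)).jacobson).ringCon.Quotient ≃+*
        ((⊥ : TwoSidedIdeal (End Z)).jacobson).ringCon.Quotient) := by
  classical
  haveI := hmono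
  haveI := hepi
  -- nontriviality
  have hX1 : (𝟙 X : X ⟶ X) ≠ 0 := by
    intro h
    exact hα_nsplit ⟨0, by rw [Limits.comp_zero, h]⟩
  have hZ1 : (𝟙 Z : Z ⟶ Z) ≠ 0 := by
    intro h
    exact hβ_nsplit ⟨0, by rw [Limits.zero_comp, h]⟩
  -- idempotents in End X are trivial
  have idemX : ∀ e : X ⟶ X, e ≫ e = e → e = 0 ∨ e = 𝟙 X := by
    have key : ∀ e : X ⟶ X, e ≫ e = e → (∃ r : X ⟶ X, e ≫ r = 𝟙 X) → e = 𝟙 X := by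
      rintro e he ⟨r, hr⟩
      calc e = e ≫ (e ≫ r) := by rw [hr, Category.comp_id]
        _ = (e ≫ e) ≫ r := by rw [Category.assoc]
        _ = 𝟙 X := by rw [he, hr]
    intro e he
    by_cases h1 : ∃ r : X ⟶ X, e ≫ r = 𝟙 X
    · exact Or.inr (key e he h1)
    · by_cases h2 : ∃ r : X ⟶ X, (𝟙 X - e) ≫ r = 𝟙 X
      · have he2 : (𝟙 X - e) ≫ (𝟙 X - e) = 𝟙 X - e := by
          simp only [Preadditive.sub_comp, Preadditive.comp_sub, Category.id_comp, Category.comp_id, he]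
          abel
        exact Or.inl (sub_eq_self.mp (key (𝟙 X - e) he2 h2))
      · obtain ⟨δ1, hδ1⟩ := hlas X e h1
        obtain ⟨δ2, hδ2⟩ := hlas X (𝟙 X - e) h2
        exact absurd ⟨δ1 + δ2, by rw [Preadditive.comp_add, hδ1, hδ2]; abel⟩ hα_nsplit
  -- idempotents in End Z are trivial
  have idemZ : ∀ e : Z ⟶ Z, e ≫ e = e → e = 0 ∨ e = 𝟙 Z := by
    have key : ∀ e : Z ⟶ Z, e ≫ e = e → (∃ s : Z ⟶ Z, s ≫ e = 𝟙 Z) → e = 𝟙 Z := by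
      rintro e he ⟨s, hs⟩
      calc e = (s ≫ e) ≫ e := by rw [hs, Category.id_comp]
        _ = s ≫ (e ≫ e) := by rw [Category.assoc]
        _ = 𝟙 Z := by rw [he, hs]
    intro e he
    by_cases h1 : ∃ s : Z ⟶ Z, s ≫ e = 𝟙 Z
    · exact Or.inr (key e he h1)
    · by_cases h2 : ∃ s : Z ⟶ Z, s ≫ (𝟙 Z - e) = 𝟙 Z
      · have he2 : (𝟙 Z - e) ≫ (𝟙 Z - e) = 𝟙 Z - e := by
          simp only [Preadditive.sub_comp, Preadditive.comp_sub, Category.id_comp, Category.comp_id, he]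
          abel
        exact Or.inl (sub_eq_self.mp (key (𝟙 Z - e) he2 h2))
      · obtain ⟨δ1, hδ1⟩ := hras Z e h1
        obtain ⟨δ2, hδ2⟩ := hras Z (𝟙 Z - e) h2
        exact absurd ⟨δ1 + δ2, by rw [Preadditive.add_comp, hδ1, hδ2]; abel⟩ hβ_nsplit
  -- a right-split endomorphism of X is a two-sided unit
  have unitX : ∀ x : X ⟶ X, (∃ r : X ⟶ X, x ≫ r = 𝟙 X) →
      ∃ r : X ⟶ X, x ≫ r = 𝟙 X ∧ r ≫ x = 𝟙 X := by
    rintro x ⟨r, hr⟩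
    have hid : (r ≫ x) ≫ (r ≫ x) = r ≫ x := by
      calc (r ≫ x) ≫ (r ≫ x) = r ≫ (x ≫ r) ≫ x := by simp [Category.assoc]
        _ = r ≫ x := by rw [hr, Category.id_comp]
    rcases idemX (r ≫ x) hid with h | h
    · exfalso
      have hr0 : r = 0 := by
        calc r = r ≫ (x ≫ r) := by rw [hr, Category.comp_id]
          _ = (r ≫ x) ≫ r := by rw [Category.assoc]
          _ = 0 := by rw [h, Limits.zero_comp]
      exact hX1 (by rw [← hr, hr0, Limits.comp_zero])
    · exact ⟨r, hr, h⟩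
  -- a left-split endomorphism of Z is a two-sided unit
  have unitZ : ∀ x : Z ⟶ Z, (∃ s : Z ⟶ Z, s ≫ x = 𝟙 Z) →
      ∃ s : Z ⟶ Z, s ≫ x = 𝟙 Z ∧ x ≫ s = 𝟙 Z := by
    rintro x ⟨s, hs⟩
    have hid : (x ≫ s) ≫ (x ≫ s) = x ≫ s := by
      calc (x ≫ s) ≫ (x ≫ s) = x ≫ (s ≫ x) ≫ s := by simp [Category.assoc]
        _ = x ≫ s := by rw [hs, Category.id_comp]
    rcases idemZ (x ≫ s) hid with h | h
    · exfalso
      have hs0 : s = 0 := by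
        calc s = (s ≫ x) ≫ s := by rw [hs, Category.id_comp]
          _ = s ≫ (x ≫ s) := by rw [Category.assoc]
          _ = 0 := by rw [h, Limits.comp_zero]
      exact hZ1 (by rw [← hs, hs0, Limits.zero_comp])
    · exact ⟨s, hs, h⟩
  -- a non-factoring endomorphism of X is a unit
  have factorX : ∀ x : X ⟶ X, (¬ ∃ δ : Y ⟶ X, α ≫ δ = x) →
      ∃ r : X ⟶ X, x ≫ r = 𝟙 X ∧ r ≫ x = 𝟙 X := by
    intro x hx
    apply unitX
    by_contra h
    exact hx (hlas X x h)
  have factorZ : ∀ x : Z ⟶ Z, (¬ ∃ δ : Z ⟶ Y, δ ≫ β = x) →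
      ∃ s : Z ⟶ Z, s ≫ x = 𝟙 Z ∧ x ≫ s = 𝟙 Z := by
    intro x hx
    apply unitZ
    by_contra h
    exact hx (hras Z x h)
  -- β ≫ h is never a split epi, hence every h lifts along β
  have liftZ : ∀ h : Z ⟶ Z, ∃ g : Y ⟶ Y, g ≫ β = β ≫ h := by
    intro h
    apply hras Y (β ≫ h)
    rintro ⟨t, ht⟩
    have hs : (t ≫ β) ≫ h = 𝟙 Z := by rw [Category.assoc]; exact ht
    obtain ⟨s', hs'1, hs'2⟩ := unitZ h ⟨t ≫ β, hs⟩
    have hss : t ≫ β = s' := by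
      calc t ≫ β = (t ≫ β) ≫ (h ≫ s') := by rw [hs'2, Category.comp_id]
        _ = ((t ≫ β) ≫ h) ≫ s' := by simp only [Category.assoc]
        _ = s' := by rw [hs, Category.id_comp]
    refine hβ_nsplit ⟨h ≫ t, ?_⟩
    rw [Category.assoc, hss, hs'2]
  -- f ≫ α is never a split mono, hence every f extends along α
  have extendX : ∀ f : X ⟶ X, ∃ g : Y ⟶ Y, α ≫ g = f ≫ α := by
    intro f
    apply hlas Y (f ≫ α)
    rintro ⟨r, hr⟩
    have hu : f ≫ (α ≫ r) = 𝟙 X := by rw [← Category.assoc]; exact hr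
    obtain ⟨u', hu'1, hu'2⟩ := unitX f ⟨α ≫ r, hu⟩
    have huu : α ≫ r = u' := by
      calc α ≫ r = (u' ≫ f) ≫ (α ≫ r) := by rw [hu'2, Category.id_comp]
        _ = u' ≫ (f ≫ (α ≫ r)) := by simp only [Category.assoc]
        _ = u' := by rw [hu, Category.comp_id]
    refine hα_nsplit ⟨r ≫ f, ?_⟩
    rw [← Category.assoc, huu]
    exact hu'2
  -- cokernel property of β
  have cokerfac : ∀ {W : A} (φ : Y ⟶ W), α ≫ φ = 0 → ∃ ε : Z ⟶ W, β ≫ ε = φ := by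
    intro W φ hφ
    obtain ⟨δ₀, hδ₀⟩ := hker _ (Limits.kernel.ι β) (Limits.kernel.condition β)
    have h0 : Limits.kernel.ι β ≫ φ = 0 := by
      rw [← hδ₀, Category.assoc, hφ, Limits.comp_zero]
    exact ⟨Abelian.epiDesc β φ h0, Abelian.comp_epiDesc β φ h0⟩
  -- transfer lemmas for commuting triples
  have TXZ : ∀ (f : X ⟶ X) (g : Y ⟶ Y) (h : Z ⟶ Z), f ≫ α = α ≫ g → g ≫ β = β ≫ h →
      (∃ δ : Y ⟶ X, α ≫ δ = f) → ∃ ε : Z ⟶ Y, ε ≫ β = h := by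
    rintro f g h hfg hgh ⟨δ, hδ⟩
    have h1 : α ≫ (g - δ ≫ α) = 0 := by
      rw [Preadditive.comp_sub, ← hfg, ← hδ]
      simp [Category.assoc]
    obtain ⟨ε, hε⟩ := cokerfac _ h1
    refine ⟨ε, ?_⟩
    have : β ≫ (ε ≫ β) = β ≫ h := by
      rw [← Category.assoc, hε, Preadditive.sub_comp, Category.assoc, hcomp, Limits.comp_zero, sub_zero, hgh]
    exact (cancel_epi β).1 this
  have TZX : ∀ (f : X ⟶ X) (g : Y ⟶ Y) (h : Z ⟶ Z), f ≫ α = α ≫ g → g ≫ β = β ≫ h →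
      (∃ ε : Z ⟶ Y, ε ≫ β = h) → ∃ δ : Y ⟶ X, α ≫ δ = f := by
    rintro f g h hfg hgh ⟨ε, hε⟩
    have h1 : (g - β ≫ ε) ≫ β = 0 := by
      rw [Preadditive.sub_comp, hgh, ← hε]
      simp [Category.assoc]
    obtain ⟨δ, hδ⟩ := hker _ _ h1
    refine ⟨δ, ?_⟩
    apply (cancel_mono α).1
    rw [hfg]
    have hg : g = δ ≫ α + β ≫ ε := by rw [hδ]; abel
    rw [hg, Preadditive.comp_add, Category.assoc, ← Category.assoc α β ε, hcomp, Limits.zero_comp, add_zero,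
      ← Category.assoc]
  -- triple existence
  have TfromX : ∀ f : X ⟶ X, ∃ (h : Z ⟶ Z) (g : Y ⟶ Y), f ≫ α = α ≫ g ∧ g ≫ β = β ≫ h := by
    intro f
    obtain ⟨g, hg⟩ := extendX f
    have h0 : α ≫ (g ≫ β) = 0 := by
      rw [← Category.assoc, hg, Category.assoc, hcomp, Limits.comp_zero]
    obtain ⟨h, hh⟩ := cokerfac _ h0
    exact ⟨h, g, hg.symm, hh.symm⟩
  have TfromZ : ∀ h : Z ⟶ Z, ∃ (f : X ⟶ X) (g : Y ⟶ Y), f ≫ α = α ≫ g ∧ g ≫ β = β ≫ h := by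
    intro h
    obtain ⟨g, hg⟩ := liftZ h
    have h0 : (α ≫ g) ≫ β = 0 := by
      rw [Category.assoc, hg, ← Category.assoc, hcomp, Limits.zero_comp]
    obtain ⟨f, hf⟩ := hker _ _ h0
    exact ⟨f, g, hf, hg⟩
  -- membership in the Jacobson radical of End X
  have memJX : ∀ x : End X,
      x ∈ (⊥ : TwoSidedIdeal (End X)).jacobson ↔ ∃ δ : Y ⟶ X, α ≫ δ = x := by
    intro x
    rw [TwoSidedIdeal.mem_jacobson_iff]
    constructor
    · intro hx
      by_contra hfac
      obtain ⟨r, hr1, hr2⟩ := factorX x hfac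
      obtain ⟨z0, hz0⟩ := hx (-r)
      rw [TwoSidedIdeal.mem_bot] at hz0
      have hzz : ∃ z : X ⟶ X, x ≫ (-r) ≫ z + z - 𝟙 X = 0 := ⟨z0, hz0⟩
      obtain ⟨z, hz'⟩ := hzz
      rw [Preadditive.neg_comp, Preadditive.comp_neg, ← Category.assoc, hr1,
        Category.id_comp, neg_add_cancel, zero_sub] at hz'
      exact hX1 (neg_eq_zero.mp hz')
    · rintro ⟨δ, hδ⟩ y
      have hδ' : α ≫ (δ ≫ y) = x ≫ y := by
        rw [← hδ, Category.assoc]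
      have hw : ¬ ∃ δ'' : Y ⟶ X, α ≫ δ'' = x ≫ y + 𝟙 X := by
        rintro ⟨δ'', hδ''⟩
        refine hα_nsplit ⟨δ'' - (δ ≫ y), ?_⟩
        rw [Preadditive.comp_sub, hδ'', hδ']
        abel
      obtain ⟨r, hr1, hr2⟩ := factorX _ hw
      refine ⟨r, ?_⟩
      rw [TwoSidedIdeal.mem_bot]
      show x ≫ y ≫ r + r - 𝟙 X = 0
      have hexp : x ≫ y ≫ r + r = 𝟙 X := by
        rw [← hr1, Preadditive.add_comp, Category.id_comp, Category.assoc]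
      rw [hexp, sub_self]
  -- membership in the Jacobson radical of End Z
  have memJZ : ∀ x : End Z,
      x ∈ (⊥ : TwoSidedIdeal (End Z)).jacobson ↔ ∃ ε : Z ⟶ Y, ε ≫ β = x := by
    intro x
    rw [TwoSidedIdeal.mem_jacobson_iff]
    constructor
    · intro hx
      by_contra hfac
      obtain ⟨s, hs1, hs2⟩ := factorZ x hfac
      obtain ⟨z0, hz0⟩ := hx (-s)
      rw [TwoSidedIdeal.mem_bot] at hz0
      have hzz : ∃ z : Z ⟶ Z, x ≫ (-s) ≫ z + z - 𝟙 Z = 0 := ⟨z0, hz0⟩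
      obtain ⟨z, hz'⟩ := hzz
      rw [Preadditive.neg_comp, Preadditive.comp_neg, ← Category.assoc, hs2,
        Category.id_comp, neg_add_cancel, zero_sub] at hz'
      exact hZ1 (neg_eq_zero.mp hz')
    · rintro ⟨ε, hε⟩ y
      obtain ⟨g, hg⟩ := liftZ y
      have hε' : (ε ≫ g) ≫ β = x ≫ y := by
        rw [Category.assoc, hg, ← hε, Category.assoc]
      have hw : ¬ ∃ ε'' : Z ⟶ Y, ε'' ≫ β = x ≫ y + 𝟙 Z := by
        rintro ⟨ε'', hε''⟩
        refine hβ_nsplit ⟨ε'' - (ε ≫ g), ?_⟩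
        rw [Preadditive.sub_comp, hε'', hε']
        abel
      obtain ⟨s, hs1, hs2⟩ := factorZ _ hw
      refine ⟨s, ?_⟩
      rw [TwoSidedIdeal.mem_bot]
      show x ≫ y ≫ s + s - 𝟙 Z = 0
      have hexp : x ≫ y ≫ s + s = 𝟙 Z := by
        rw [← hs2, Preadditive.add_comp, Category.id_comp, Category.assoc]
      rw [hexp, sub_self]
  -- congruence transfer between the two quotients
  have key : ∀ (f : X ⟶ X) (g : Y ⟶ Y) (h : Z ⟶ Z) (f' : X ⟶ X) (g' : Y ⟶ Y) (h' : Z ⟶ Z),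
      f ≫ α = α ≫ g → g ≫ β = β ≫ h → f' ≫ α = α ≫ g' → g' ≫ β = β ≫ h' →
      ((⊥ : TwoSidedIdeal (End X)).jacobson).ringCon (f : End X) (f' : End X) →
      ((⊥ : TwoSidedIdeal (End Z)).jacobson).ringCon (h : End Z) (h' : End Z) := by
    intro f g h f' g' h' ha hb ha' hb' hrel
    have hmem := (memJX _).mp ((TwoSidedIdeal.rel_iff _ _ _).mp hrel)
    refine (TwoSidedIdeal.rel_iff _ _ _).mpr ((memJZ _).mpr ?_)
    refine TXZ (f - f') (g - g') (h - h') ?_ ?_ hmem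
    · rw [Preadditive.sub_comp, Preadditive.comp_sub, ha, ha']
    · rw [Preadditive.sub_comp, Preadditive.comp_sub, hb, hb']
  have keyZX : ∀ (f : X ⟶ X) (g : Y ⟶ Y) (h : Z ⟶ Z) (f' : X ⟶ X) (g' : Y ⟶ Y) (h' : Z ⟶ Z),
      f ≫ α = α ≫ g → g ≫ β = β ≫ h → f' ≫ α = α ≫ g' → g' ≫ β = β ≫ h' →
      ((⊥ : TwoSidedIdeal (End Z)).jacobson).ringCon (h : End Z) (h' : End Z) →
      ((⊥ : TwoSidedIdeal (End X)).jacobson).ringCon (f : End X) (f' : End X) := by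
    intro f g h f' g' h' ha hb ha' hb' hrel
    have hmem := (memJZ _).mp ((TwoSidedIdeal.rel_iff _ _ _).mp hrel)
    refine (TwoSidedIdeal.rel_iff _ _ _).mpr ((memJX _).mpr ?_)
    refine TZX (f - f') (g - g') (h - h') ?_ ?_ hmem
    · rw [Preadditive.sub_comp, Preadditive.comp_sub, ha, ha']
    · rw [Preadditive.sub_comp, Preadditive.comp_sub, hb, hb']
  -- the maps on representatives
  let φ : (X ⟶ X) → ((⊥ : TwoSidedIdeal (End Z)).jacobson).ringCon.Quotient :=
    fun f => (((TfromX f).choose : End Z) : _)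
  let ψ : (Z ⟶ Z) → ((⊥ : TwoSidedIdeal (End X)).jacobson).ringCon.Quotient :=
    fun h => (((TfromZ h).choose : End X) : _)
  have φresp : ∀ a b : End X, ((⊥ : TwoSidedIdeal (End X)).jacobson).ringCon a b → φ a = φ b := by
    intro a b hab
    obtain ⟨ga, haa, hba⟩ := (TfromX a).choose_spec
    obtain ⟨gb, hab', hbb⟩ := (TfromX b).choose_spec
    exact (RingCon.eq (R := End Z) _).mpr (key a ga _ b gb _ haa hba hab' hbb hab)
  have ψresp : ∀ a b : End Z, ((⊥ : TwoSidedIdeal (End Z)).jacobson).ringCon a b → ψ a = ψ b := by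
    intro a b hab
    obtain ⟨ga, haa, hba⟩ := (TfromZ a).choose_spec
    obtain ⟨gb, hab', hbb⟩ := (TfromZ b).choose_spec
    exact (RingCon.eq (R := End X) _).mpr (keyZX _ ga a _ gb b haa hba hab' hbb hab)
  -- the maps on quotients
  let Φbar : ((⊥ : TwoSidedIdeal (End X)).jacobson).ringCon.Quotient →
      ((⊥ : TwoSidedIdeal (End Z)).jacobson).ringCon.Quotient :=
    Quotient.lift φ φresp
  let Ψbar : ((⊥ : TwoSidedIdeal (End Z)).jacobson).ringCon.Quotient →
      ((⊥ : TwoSidedIdeal (End X)).jacobson).ringCon.Quotient :=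
    Quotient.lift ψ ψresp
  have Φspec : ∀ (f : X ⟶ X) (g : Y ⟶ Y) (h : Z ⟶ Z), f ≫ α = α ≫ g → g ≫ β = β ≫ h →
      Φbar ((f : End X) : _) = ((h : End Z) : _) := by
    intro f g h ha hb
    obtain ⟨g0, ha0, hb0⟩ := (TfromX f).choose_spec
    exact (RingCon.eq (R := End Z) _).mpr (key f g0 _ f g h ha0 hb0 ha hb ((RingCon.eq (R := End X) _).mp rfl))
  have Ψspec : ∀ (f : X ⟶ X) (g : Y ⟶ Y) (h : Z ⟶ Z), f ≫ α = α ≫ g → g ≫ β = β ≫ h →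
      Ψbar ((h : End Z) : _) = ((f : End X) : _) := by
    intro f g h ha hb
    obtain ⟨g0, ha0, hb0⟩ := (TfromZ h).choose_spec
    exact (RingCon.eq (R := End X) _).mpr (keyZX _ g0 h f g h ha0 hb0 ha hb ((RingCon.eq (R := End Z) _).mp rfl))
  have repX : ∀ q : ((⊥ : TwoSidedIdeal (End X)).jacobson).ringCon.Quotient,
      ∃ f : X ⟶ X, ((f : End X) : _) = q := by
    intro q
    obtain ⟨f, hf⟩ := Quotient.exists_rep q
    exact ⟨f, hf⟩
  have repZ : ∀ q : ((⊥ : TwoSidedIdeal (End Z)).jacobson).ringCon.Quotient,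
      ∃ h : Z ⟶ Z, ((h : End Z) : _) = q := by
    intro q
    obtain ⟨h, hh⟩ := Quotient.exists_rep q
    exact ⟨h, hh⟩
  refine ⟨{ toFun := Φbar, invFun := Ψbar, left_inv := ?_, right_inv := ?_,
            map_mul' := ?_, map_add' := ?_ }⟩
  · intro q
    obtain ⟨f, rfl⟩ := repX q
    obtain ⟨h, g, ha, hb⟩ := TfromX f
    rw [Φspec f g h ha hb, Ψspec f g h ha hb]
  · intro q
    obtain ⟨h, rfl⟩ := repZ q
    obtain ⟨f, g, ha, hb⟩ := TfromZ h
    rw [Ψspec f g h ha hb, Φspec f g h ha hb]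
  · intro q r
    obtain ⟨f1, rfl⟩ := repX q
    obtain ⟨f2, rfl⟩ := repX r
    obtain ⟨h1, g1, ha1, hb1⟩ := TfromX f1
    obtain ⟨h2, g2, ha2, hb2⟩ := TfromX f2
    have t3 : (f2 ≫ f1) ≫ α = α ≫ (g2 ≫ g1) := by
      rw [Category.assoc, ha1, ← Category.assoc, ha2, Category.assoc]
    have t4 : (g2 ≫ g1) ≫ β = β ≫ (h2 ≫ h1) := by
      rw [Category.assoc, hb1, ← Category.assoc, hb2, Category.assoc]
    show Φbar (((f2 ≫ f1 : End X)) : _) = Φbar ((f1 : End X) : _) * Φbar ((f2 : End X) : _)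
    rw [Φspec (f2 ≫ f1) (g2 ≫ g1) (h2 ≫ h1) t3 t4, Φspec f1 g1 h1 ha1 hb1,
      Φspec f2 g2 h2 ha2 hb2]
    rfl
  · intro q r
    obtain ⟨f1, rfl⟩ := repX q
    obtain ⟨f2, rfl⟩ := repX r
    obtain ⟨h1, g1, ha1, hb1⟩ := TfromX f1
    obtain ⟨h2, g2, ha2, hb2⟩ := TfromX f2
    have t3 : (f1 + f2) ≫ α = α ≫ (g1 + g2) := by
      rw [Preadditive.add_comp, Preadditive.comp_add, ha1, ha2]
    have t4 : (g1 + g2) ≫ β = β ≫ (h1 + h2) := by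
      rw [Preadditive.add_comp, Preadditive.comp_add, hb1, hb2]
    show Φbar (((f1 + f2 : End X)) : _) = Φbar ((f1 : End X) : _) + Φbar ((f2 : End X) : _)
    rw [Φspec (f1 + f2) (g1 + g2) (h1 + h2) t3 t4, Φspec f1 g1 h1 ha1 hb1,
      Φspec f2 g2 h2 ha2 hb2]
    rfl
end

section
/- Let A be an additive category, C a full subcategory, F : A^op → Ab an additive functor, and H ⊆ F|_C a subfunctor of the restriction of F to C. Define the subfunctor F_H ⊆ F by F_H(X) = ⋂_{α : C → X, C ∈ C} F(α)^{-1}(H(C)). Then F_H restricted to C equals H, and F_H is C-determined: for any subfunctor F' ⊆ F, one has F' ⊆ F_H if and only if F'|_C ⊆ H. -/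
open CategoryTheory Opposite

section Stmt4

variable {A : Type*} [Category A] [Preadditive A] [Limits.HasFiniteBiproducts A]
variable (F : Aᵒᵖ ⥤ AddCommGrpCat) (𝒞 : Set A)

/-- A family of subgroups `G X ⊆ F(X)` is a subfunctor of `F : Aᵒᵖ → Ab` if it is
stable under the action of morphisms: for `f : X ⟶ Y`, `F(f)` maps `G Y` into `G X`. -/
def IsSubfunctor (G : ∀ X : A, AddSubgroup (F.obj (op X))) : Prop :=
  ∀ ⦃X Y : A⦄ (f : X ⟶ Y) (y : F.obj (op Y)), y ∈ G Y → F.map f.op y ∈ G X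

/-- A family of subgroups indexed by the objects of the full subcategory `𝒞` is a
subfunctor of the restriction `F|_𝒞` if it is stable under morphisms of `𝒞`. -/
def IsSubfunctorOn (H : ∀ X : A, AddSubgroup (F.obj (op X))) : Prop :=
  ∀ ⦃X Y : A⦄, X ∈ 𝒞 → Y ∈ 𝒞 →
    ∀ (f : X ⟶ Y) (y : F.obj (op Y)), y ∈ H Y → F.map f.op y ∈ H X

/-- The subfunctor `F_H ⊆ F` determined by `H ⊆ F|_𝒞`, defined by
`F_H(X) = ⋂_{α : C → X, C ∈ 𝒞} F(α)⁻¹(H(C))`. -/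
def FH (H : ∀ X : A, AddSubgroup (F.obj (op X))) (X : A) :
    AddSubgroup (F.obj (op X)) where
  carrier := {x | ∀ (C : A), C ∈ 𝒞 → ∀ α : C ⟶ X, F.map α.op x ∈ H C}
  zero_mem' := by
    intro C hC α
    simpa using (H C).zero_mem
  add_mem' := by
    intro a b ha hb C hC α
    rw [map_add]
    exact (H C).add_mem (ha C hC α) (hb C hC α)
  neg_mem' := by
    intro a ha C hC α
    rw [map_neg]
    exact (H C).neg_mem (ha C hC α)

end Stmt4

section

variable {A : Type*} [Category A] {F : Aᵒᵖ ⥤ AddCommGrpCat} {𝒞 : Set A}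
  {H : ∀ X : A, AddSubgroup (F.obj (op X))}

theorem FH_le_of_mem {C : A} (hC : C ∈ 𝒞) : FH F 𝒞 H C ≤ H C :=
  fun x hx => by simpa using hx C hC (𝟙 C)

theorem le_FH_of_mem (hH : IsSubfunctorOn F 𝒞 H) {C : A} (hC : C ∈ 𝒞) : H C ≤ FH F 𝒞 H C :=
  fun x hx _ hC' α => hH hC' hC α x hx

theorem FH_eq_of_mem (hH : IsSubfunctorOn F 𝒞 H) {C : A} (hC : C ∈ 𝒞) : FH F 𝒞 H C = H C :=
  le_antisymm (FH_le_of_mem hC) (le_FH_of_mem hH hC)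

theorem le_FH_of_forall_mem_le {G : ∀ X : A, AddSubgroup (F.obj (op X))}
    (hG : IsSubfunctor F G) (h : ∀ C ∈ 𝒞, G C ≤ H C) (X : A) : G X ≤ FH F 𝒞 H X :=
  fun x hx C hC α => h C hC (hG α x hx)

theorem forall_le_FH_iff {G : ∀ X : A, AddSubgroup (F.obj (op X))} (hG : IsSubfunctor F G) :
    (∀ X : A, G X ≤ FH F 𝒞 H X) ↔ ∀ C ∈ 𝒞, G C ≤ H C :=
  ⟨fun h C hC => (h C).trans (FH_le_of_mem hC), le_FH_of_forall_mem_le hG⟩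

end

section Stmt4

variable {A : Type*} [Category A] [Preadditive A] [Limits.HasFiniteBiproducts A]
variable (F : Aᵒᵖ ⥤ AddCommGrpCat) (𝒞 : Set A)

/-- `F_H` restricted to `𝒞` equals `H`, and `F_H` is `𝒞`-determined: a subfunctor
`F' ⊆ F` is contained in `F_H` if and only if its restriction to `𝒞` is contained in `H`. -/
theorem FH_restriction_eq_and_determined
    (H : ∀ X : A, AddSubgroup (F.obj (op X))) (hH : IsSubfunctorOn F 𝒞 H) :
    (∀ C ∈ 𝒞, FH F 𝒞 H C = H C) ∧
      (∀ G : ∀ X : A, AddSubgroup (F.obj (op X)), IsSubfunctor F G →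
        ((∀ X : A, G X ≤ FH F 𝒞 H X) ↔ (∀ C ∈ 𝒞, G C ≤ H C))) :=
  ⟨fun _ hC => FH_eq_of_mem hH hC, fun _ hG => forall_le_FH_iff hG⟩

end Stmt4
end

section
/- Let A be an additive category, Y an object, and consider the preorder on morphisms ending at Y where α' ≤ α means α' factors through α. Let φ : Y' → Y be a morphism, C ⊆ C' sets of objects, H ⊆ Hom_A(C, Y) and H' ⊆ Hom_A(C', Y') submodules. If for each C ∈ C composition with φ sends H'(C) into H(C), then φ ∘ α_{C',H'} ≤ α_{C,H}, where α_{C,H} denotes the right minimal right C-determined morphism with Im Hom_A(C, α_{C,H}) = H (assumed to exist). -/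
open CategoryTheory Opposite

section Stmt7

variable {A : Type*} [Category A] [Preadditive A] [Limits.HasFiniteBiproducts A]

/-- `α` is right minimal: every endomorphism `φ` with `φ ≫ α = α` is invertible. -/
def RightMinimal {X Y : A} (α : X ⟶ Y) : Prop :=
  ∀ φ : X ⟶ X, φ ≫ α = α → IsIso φ

/-- `α : X ⟶ Y` is right `𝒞`-determined. -/
def RightDetermined {X Y : A} (α : X ⟶ Y) (𝒞 : Set A) : Prop :=
  ∀ ⦃X' : A⦄ (α' : X' ⟶ Y),
    (∀ C ∈ 𝒞, ∀ g : C ⟶ X', ∃ h : C ⟶ X, h ≫ α = g ≫ α') →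
    ∃ φ : X' ⟶ X, φ ≫ α = α'

/-- Functoriality of `(𝒞, H, Y) ↦ α_{𝒞,H}`: given `φ : Y' ⟶ Y`, sets of objects
`𝒞 ⊆ 𝒞'`, submodules `H ⊆ Hom_A(𝒞, Y)` and `H' ⊆ Hom_A(𝒞', Y')` such that composition
with `φ` sends `H'(C)` into `H(C)` for all `C ∈ 𝒞`, the composite `φ ∘ α_{𝒞',H'}`
factors through `α_{𝒞,H}` (i.e. `φ ∘ α_{𝒞',H'} ≤ α_{𝒞,H}` in the factorization
preorder of morphisms ending at `Y`). -/
theorem comp_factors_through_determined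
    {Y Y' : A} (φ : Y' ⟶ Y) (𝒞 𝒞' : Set A) (h𝒞 : 𝒞 ⊆ 𝒞')
    (H : ∀ C : A, AddSubgroup (C ⟶ Y)) (H' : ∀ C : A, AddSubgroup (C ⟶ Y'))
    -- `α_{𝒞,H} : X ⟶ Y`, right minimal, right `𝒞`-determined, with image `H`
    {X : A} (α : X ⟶ Y) (hmin : RightMinimal α) (hdet : RightDetermined α 𝒞)
    (him : ∀ C ∈ 𝒞, ∀ g : C ⟶ Y, (g ∈ H C ↔ ∃ h : C ⟶ X, h ≫ α = g))
    -- `α_{𝒞',H'} : X' ⟶ Y'`, right minimal, right `𝒞'`-determined, with image `H'`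
    {X' : A} (α' : X' ⟶ Y') (hmin' : RightMinimal α') (hdet' : RightDetermined α' 𝒞')
    (him' : ∀ C ∈ 𝒞', ∀ g : C ⟶ Y', (g ∈ H' C ↔ ∃ h : C ⟶ X', h ≫ α' = g))
    -- composition with `φ` sends `H'` into `H` over `𝒞`
    (hφ : ∀ C ∈ 𝒞, ∀ g : C ⟶ Y', g ∈ H' C → g ≫ φ ∈ H C) :
    ∃ ψ : X' ⟶ X, ψ ≫ α = α' ≫ φ := by
  apply hdet (α' ≫ φ)
  intro C hC g
  have h1 : g ≫ α' ∈ H' C := (him' C (h𝒞 hC) _).2 ⟨g, rfl⟩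
  have h2 := hφ C hC _ h1
  obtain ⟨h, hh⟩ := (him C hC _).1 h2
  exact ⟨h, by simpa using hh⟩

end Stmt7
end

section
/- Fix an object Y in an additive category A and a set C of objects. The assignment sending a morphism α ending at Y to the subfunctor Im Hom_A(C, α) ⊆ Hom_A(C, Y), and the assignment H ↦ α_{C,H} (the right minimal right C-determined morphism with image H, assumed to exist for all H), form a Galois connection: α ≤ α_{C,H} in the factorization preorder if and only if Im Hom_A(C, α) ⊆ H. -/
open CategoryTheory Opposite

section Stmt8

variable {A : Type*} [Category A] [Preadditive A] [Limits.HasFiniteBiproducts A]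

/-- The Galois connection between the factorization preorder of morphisms ending at `Y`
and the poset of submodules of `Hom_A(𝒞, Y)`: for `α_{𝒞,H}` the right minimal right
`𝒞`-determined morphism with image `H`, a morphism `α` factors through `α_{𝒞,H}`
if and only if `Im Hom_A(𝒞, α) ⊆ H`. -/
theorem factorization_galoisConnection
    {Y : A} (𝒞 : Set A) (H : ∀ C : A, AddSubgroup (C ⟶ Y))
    {XH : A} (αH : XH ⟶ Y) (hmin : RightMinimal αH) (hdet : RightDetermined αH 𝒞)
    (him : ∀ C ∈ 𝒞, ∀ g : C ⟶ Y, (g ∈ H C ↔ ∃ h : C ⟶ XH, h ≫ αH = g)) :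
    ∀ (X : A) (α : X ⟶ Y),
      (∃ ψ : X ⟶ XH, ψ ≫ αH = α) ↔ (∀ C ∈ 𝒞, ∀ g : C ⟶ X, g ≫ α ∈ H C) := by
  intro X α
  constructor
  · rintro ⟨ψ, rfl⟩ C hC g
    exact (him C hC _).2 ⟨g ≫ ψ, by simp⟩
  · intro h
    exact hdet α fun C hC g => (him C hC _).1 (h C hC g)

end Stmt8
end

section
/- Let A be an additive category and α : X → Y a morphism such that there exists a right minimal morphism α' : X' → Y with the property that α factors through α' and α' factors through α. Then there is a direct sum decomposition X ≅ X' ⊕ X'' such that under this identification α restricted to X' equals α' and α restricted to X'' is zero. -/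
open CategoryTheory Limits

/-- If `α : X ⟶ Y` and a right minimal `α' : X' ⟶ Y` factor through each other, then
`X` decomposes as `X ≅ X' ⊞ X''` such that, under this identification, `α` restricted
to `X'` equals `α'` and `α` restricted to `X''` is zero. -/
theorem decomposition_of_mutual_factorization
    {A : Type*} [Category A] [Preadditive A] [HasFiniteBiproducts A] [HasBinaryBiproducts A]
    [IsIdempotentComplete A]
    {X X' Y : A} (α : X ⟶ Y) (α' : X' ⟶ Y)
    (hmin : ∀ φ : X' ⟶ X', φ ≫ α' = α' → IsIso φ)
    (h₁ : ∃ u : X ⟶ X', u ≫ α' = α)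
    (h₂ : ∃ v : X' ⟶ X, v ≫ α = α') :
    ∃ (X'' : A) (e : X ≅ X' ⊞ X''),
      biprod.inl ≫ e.inv ≫ α = α' ∧ biprod.inr ≫ e.inv ≫ α = 0 := by
  obtain ⟨u, hu⟩ := h₁
  obtain ⟨v, hv⟩ := h₂
  have hvu : (v ≫ u) ≫ α' = α' := by rw [Category.assoc, hu, hv]
  have : IsIso (v ≫ u) := hmin _ hvu
  -- replace u by u ≫ (v ≫ u)⁻¹
  set u' : X ⟶ X' := u ≫ inv (v ≫ u) with hu'def
  have hinvα : inv (v ≫ u) ≫ α' = α' := by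
    rw [IsIso.inv_comp_eq, hvu]
  have hu' : u' ≫ α' = α := by rw [hu'def, Category.assoc, hinvα, hu]
  have hvu' : v ≫ u' = 𝟙 X' := by rw [hu'def, ← Category.assoc, IsIso.hom_inv_id]
  -- idempotent
  set p : X ⟶ X := u' ≫ v with hpdef
  set q : X ⟶ X := 𝟙 X - p with hqdef
  have hq : q ≫ q = q := by
    simp only [hqdef, hpdef, Preadditive.sub_comp, Preadditive.comp_sub, Category.id_comp,
      Category.comp_id, Category.assoc]
    rw [← Category.assoc v, hvu', Category.id_comp]
    abel
  obtain ⟨X'', i, r, hir, hri⟩ := IsIdempotentComplete.idempotents_split X q hq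
  have hiq : i ≫ q = i := by rw [← hri, ← Category.assoc, hir, Category.id_comp]
  have hiu' : i ≫ u' = 0 := by
    have h1 : i ≫ p = 0 := by
      have := hiq
      rw [hqdef, Preadditive.comp_sub, Category.comp_id, sub_eq_self] at this
      exact this
    have := h1 =≫ u'
    rw [hpdef, Category.assoc, Category.assoc, hvu', Category.comp_id, zero_comp] at this
    exact this
  have hvr : v ≫ r = 0 := by
    have hmono : Mono i := ⟨fun f g h => by
      have := h =≫ r
      simpa [hir] using this⟩
    rw [← cancel_mono i, Category.assoc, hri, zero_comp]
    simp only [hqdef, hpdef, Preadditive.comp_sub, Category.comp_id]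
    rw [← Category.assoc, hvu', Category.id_comp, sub_self]
  refine ⟨X'', ⟨biprod.lift u' r, biprod.desc v i, ?_, ?_⟩, ?_, ?_⟩
  · rw [biprod.lift_desc]
    have : r ≫ i = 𝟙 X - p := hri
    rw [this, hpdef]
    abel
  · ext <;> simp [hvu', hvr, hiu', hir]
  · simp [hv]
  · have : i ≫ α = i ≫ u' ≫ α' := by rw [hu']
    simp [this, reassoc_of% hiu']
end

section
/- Let A be an additive category with weak kernels. The Yoneda embedding X ↦ Hom_A(−, X) identifies the idempotent completion of A with the full subcategory of projective objects of the abelian category Fp(A^op, Ab) of finitely presented functors A^op → Ab. -/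
/-!
The preadditive Yoneda embedding `y` is fully faithful, and since functor categories into `Ab`
are idempotent complete it extends to a fully faithful functor on the Karoubi envelope, sending
`(X, p)` to the image of the idempotent `y p`, a retract of `y X`. Fp is closed under cokernels,
so epimorphisms of Fp are pointwise surjective; by Yoneda the representables are therefore
projective in Fp, and so are their retracts. Conversely a projective `T` splits its presentation
`y Y ↠ T`, so it is a retract of `y Y` cut out by an idempotent of `Y`, i.e. the image of an
object of the Karoubi envelope.
-/

open CategoryTheory Limits Opposite

universe v u

section Stmt12

variable {A : Type u} [Category.{v} A]

/-- An additive functor `F : Aᵒᵖ ⥤ Ab` is finitely presented (coherent) if it admits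
an exact presentation `Hom_A(−, X) → Hom_A(−, Y) → F → 0` by representable functors. -/
def IsFinitelyPresentedFunctor [Preadditive A] (F : Aᵒᵖ ⥤ AddCommGrpCat.{v}) : Prop :=
  ∃ (X Y : A) (η : preadditiveYoneda.obj X ⟶ preadditiveYoneda.obj Y)
    (ε : preadditiveYoneda.obj Y ⟶ F),
      (∀ W : Aᵒᵖ, Function.Surjective (ε.app W)) ∧
      (∀ (W : Aᵒᵖ) (y : (preadditiveYoneda.obj Y).obj W),
        ε.app W y = 0 ↔ ∃ x, η.app W x = y)

/-- Representable functors are finitely presented. -/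
lemma preadditiveYoneda_obj_isFinitelyPresented [Preadditive A] (X : A) :
    IsFinitelyPresentedFunctor (preadditiveYoneda.obj X) := by
  refine ⟨X, X, 0, 𝟙 _, fun W => fun y => ⟨y, rfl⟩, fun W y => ?_⟩
  constructor
  · intro h
    exact ⟨0, by simpa using h.symm⟩
  · rintro ⟨x, rfl⟩
    simp

/-- The Yoneda embedding of `A` into the category of finitely presented functors. -/
def fpYoneda [Preadditive A] :
    A ⥤ ObjectProperty.FullSubcategory (fun F : Aᵒᵖ ⥤ AddCommGrpCat.{v} => IsFinitelyPresentedFunctor F) :=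
  ObjectProperty.lift _ preadditiveYoneda preadditiveYoneda_obj_isFinitelyPresented

namespace CategoryTheory

def Retract.isoOfIdempotentEq {C : Type*} [Category C] {X X' Y : C} (h : Retract X Y)
    (h' : Retract X' Y) (he : h.r ≫ h.i = h'.r ≫ h'.i) : X ≅ X' where
  hom := h.i ≫ h'.r
  inv := h'.i ≫ h.r
  hom_inv_id := by
    rw [Category.assoc, ← Category.assoc h'.r, ← he]
    simp
  inv_hom_id := by
    rw [Category.assoc, ← Category.assoc h.r, he]
    simp

namespace Idempotents

variable {C D : Type*} [Category C] [Category D]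

def _root_.CategoryTheory.Functor.FullyFaithful.functorExtension₂Obj {F : C ⥤ D}
    (hF : F.FullyFaithful) : ((functorExtension₂ C D).obj F).FullyFaithful where
  preimage g := ⟨hF.preimage g.f, hF.map_injective (by
    simp only [Functor.map_comp]
    erw [hF.map_preimage]
    exact g.comm)⟩
  map_preimage g := by ext; exact hF.map_preimage g.f
  preimage_map f := by ext; simp

theorem essImage_of_retract_obj_toKaroubi {F : Karoubi C ⥤ D} (hF : F.FullyFaithful) {T : D}
    {X : C} (h : Retract T (F.obj ((toKaroubi C).obj X))) : F.essImage T := by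
  let e := hF.preimage (h.r ≫ h.i)
  have he : e ≫ e = e := hF.map_injective (by simp [e])
  let P : Karoubi C := ⟨X, e.f, by simpa using congr(($he).f)⟩
  have hP : F.map P.decompId_p ≫ F.map P.decompId_i = h.r ≫ h.i := by
    rw [← F.map_comp, ← Karoubi.decomp_p, ← hF.map_preimage (h.r ≫ h.i)]
    rfl
  exact ⟨P, ⟨((Karoubi.retract P).map F).isoOfIdempotentEq h hP⟩⟩

end Idempotents

end CategoryTheory

section Cokernel

variable {J : Type*} [Category J] {F G : J ⥤ AddCommGrpCat.{v}} (π : F ⟶ G) (W : J)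

lemma cokernel_π_app_apply_eq_zero_iff (y : G.obj W) :
    (cokernel.π π).app W y = 0 ↔ ∃ x, π.app W x = y := by
  have := ((ShortComplex.exact_cokernel π).map ((evaluation J AddCommGrpCat).obj W))
  exact ⟨ShortComplex.ab_exact_iff _ |>.1 this y, by
    rintro ⟨x, rfl⟩
    change ((π ≫ cokernel.π π).app W) x = 0
    simp⟩

lemma cokernel_π_app_surjective : Function.Surjective ((cokernel.π π).app W) :=
  (AddCommGrpCat.epi_iff_surjective _).1 inferInstance

end Cokernel

lemma preadditiveYoneda_obj_hom_ext [Preadditive A] {X : A} {F : Aᵒᵖ ⥤ AddCommGrpCat.{v}}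
    {φ ψ : preadditiveYoneda.obj X ⟶ F} (h : φ.app (op X) (𝟙 X) = ψ.app (op X) (𝟙 X)) :
    φ = ψ := by
  ext W (x : unop W ⟶ X)
  have key (χ : preadditiveYoneda.obj X ⟶ F) : χ.app W x = F.map x.op (χ.app (op X) (𝟙 X)) :=
    (congrArg (χ.app W) (Category.comp_id x).symm).trans
      (ConcreteCategory.congr_hom (χ.naturality x.op) (𝟙 X))
  rw [key, key, h]

lemma exists_preadditiveYoneda_map_comp_eq [Preadditive A] {X Y : A}
    {F : Aᵒᵖ ⥤ AddCommGrpCat.{v}} (ε : preadditiveYoneda.obj Y ⟶ F)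
    (hε : Function.Surjective (ε.app (op X))) (f : preadditiveYoneda.obj X ⟶ F) :
    ∃ t : X ⟶ Y, preadditiveYoneda.map t ≫ ε = f := by
  obtain ⟨t, ht⟩ := hε (f.app (op X) (𝟙 X))
  exact ⟨t, preadditiveYoneda_obj_hom_ext ((congrArg (ε.app _) (Category.id_comp t)).trans ht)⟩

namespace IsFinitelyPresentedFunctor

variable [Preadditive A]

lemma of_retract {F : Aᵒᵖ ⥤ AddCommGrpCat.{v}} {Y : A} (h : Retract F (preadditiveYoneda.obj Y)) :
    IsFinitelyPresentedFunctor F := by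
  obtain ⟨p, hp⟩ := preadditiveYoneda.map_surjective (h.r ≫ h.i)
  have hri (W : Aᵒᵖ) (x : F.obj W) : h.r.app W (h.i.app W x) = x := congr(($h.retract).app W x)
  have hpy (W : Aᵒᵖ) (y : unop W ⟶ Y) : y ≫ p = h.i.app W (h.r.app W y) := congr(($hp).app W y)
  refine ⟨Y, Y, preadditiveYoneda.map (𝟙 Y - p), h.r, fun W x => ⟨_, hri W x⟩,
    fun W (y : unop W ⟶ Y) => ?_⟩
  constructor
  · intro hy
    refine ⟨y, ?_⟩
    change y ≫ (𝟙 Y - p) = y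
    rw [Preadditive.comp_sub, hpy, hy, map_zero, Category.comp_id]
    exact sub_zero y
  · rintro ⟨x : unop W ⟶ Y, rfl⟩
    change h.r.app W (x ≫ (𝟙 Y - p)) = 0
    rw [Preadditive.comp_sub, Category.comp_id]
    erw [map_sub]
    rw [hpy, hri, sub_self]

lemma cokernel [HasBinaryBiproducts A] {F G : Aᵒᵖ ⥤ AddCommGrpCat.{v}} (π : F ⟶ G)
    (hF : IsFinitelyPresentedFunctor F) (hG : IsFinitelyPresentedFunctor G) :
    IsFinitelyPresentedFunctor (cokernel π) := by
  obtain ⟨-, YF, -, εF, hεF, -⟩ := hF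
  obtain ⟨XG, YG, ηG, εG, hεG, hexG⟩ := hG
  obtain ⟨a, rfl⟩ := preadditiveYoneda.map_surjective ηG
  obtain ⟨b, hb⟩ := exists_preadditiveYoneda_map_comp_eq εG (hεG _) (εF ≫ π)
  have hπ (W : Aᵒᵖ) (t : unop W ⟶ YF) : π.app W (εF.app W t) = εG.app W (t ≫ b) :=
    congr(($hb).app W t).symm
  refine ⟨XG ⊞ YF, YG, preadditiveYoneda.map (biprod.desc a b), εG ≫ cokernel.π π,
    fun W => (cokernel_π_app_surjective π W).comp (hεG W), fun W (y : unop W ⟶ YG) => ?_⟩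
  change (cokernel.π π).app W (εG.app W y) = 0 ↔ ∃ z : unop W ⟶ XG ⊞ YF, z ≫ biprod.desc a b = y
  rw [cokernel_π_app_apply_eq_zero_iff]
  constructor
  · rintro ⟨u, hu⟩
    obtain ⟨t : unop W ⟶ YF, rfl⟩ := hεF W u
    obtain ⟨x : unop W ⟶ XG, hx⟩ := (hexG W (y - t ≫ b)).1 (by
      erw [map_sub]
      rw [← hπ, hu, sub_self])
    refine ⟨biprod.lift x t, ?_⟩
    change x ≫ a = _ at hx
    rw [biprod.lift_desc, hx, sub_add_cancel]
  · rintro ⟨z, rfl⟩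
    refine ⟨εF.app W (z ≫ biprod.snd), ?_⟩
    have ha : εG.app W ((z ≫ biprod.fst) ≫ a) = 0 := (hexG W _).2 ⟨z ≫ biprod.fst, rfl⟩
    rw [hπ, biprod.desc_eq, Preadditive.comp_add]
    erw [map_add]
    rw [← Category.assoc, ha, zero_add, Category.assoc]

end IsFinitelyPresentedFunctor

abbrev FpFunctor (A : Type u) [Category.{v} A] [Preadditive A] :=
  ObjectProperty.FullSubcategory (fun F : Aᵒᵖ ⥤ AddCommGrpCat.{v} => IsFinitelyPresentedFunctor F)

namespace FpFunctor

variable [Preadditive A]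

lemma epi_of_surjective_app {E F : FpFunctor A} (e : E ⟶ F)
    (he : ∀ W, Function.Surjective (e.hom.app W)) : Epi e :=
  (ObjectProperty.ι _).epi_of_epi_map <| (NatTrans.epi_iff_epi_app _).2 fun W =>
    (AddCommGrpCat.epi_iff_surjective _).2 (he W)

lemma exists_retract_fpYoneda_obj (T : FpFunctor A) [Projective T] :
    ∃ Y : A, Nonempty (Retract T (fpYoneda.obj Y)) := by
  obtain ⟨-, Y, -, ε, hε, -⟩ := T.property
  let ε' : fpYoneda.obj Y ⟶ T := ObjectProperty.homMk ε
  have := epi_of_surjective_app ε' hε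
  exact ⟨Y, ⟨⟨Projective.factorThru (𝟙 T) ε', ε', Projective.factorThru_comp _ _⟩⟩⟩

variable [HasBinaryBiproducts A]

lemma surjective_app_of_epi {E F : FpFunctor A} (e : E ⟶ F) [Epi e] (W : Aᵒᵖ) :
    Function.Surjective (e.hom.app W) := by
  let Q : FpFunctor A := ⟨cokernel e.hom, .cokernel e.hom E.property F.property⟩
  have hq : (ObjectProperty.homMk (cokernel.π e.hom) : F ⟶ Q) = ObjectProperty.homMk 0 :=
    (cancel_epi e).1 (by ext1; simp)
  intro y
  exact (cokernel_π_app_apply_eq_zero_iff e.hom W y).1 congr(($hq).hom.app W y)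

lemma projective_fpYoneda_obj (X : A) : Projective (fpYoneda.obj X) where
  factors {E F} f e _ := by
    obtain ⟨-, Y, -, ε, hε, -⟩ := E.property
    obtain ⟨t, ht⟩ := exists_preadditiveYoneda_map_comp_eq (ε ≫ e.hom)
      ((surjective_app_of_epi e _).comp (hε _)) f.hom
    exact ⟨fpYoneda.map t ≫ ObjectProperty.homMk ε, by ext1; exact ht⟩

end FpFunctor

open Idempotents

section KaroubiYoneda

variable [Preadditive A]

noncomputable def karoubiYoneda : Karoubi A ⥤ Aᵒᵖ ⥤ AddCommGrpCat.{v} :=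
  (functorExtension A _).obj preadditiveYoneda

noncomputable def fullyFaithfulKaroubiYoneda : (karoubiYoneda (A := A)).FullyFaithful :=
  (Functor.FullyFaithful.ofFullyFaithful preadditiveYoneda).functorExtension₂Obj.comp
    (toKaroubiEquivalence _).fullyFaithfulInverse

noncomputable def toKaroubiCompKaroubiYonedaIso :
    toKaroubi A ⋙ karoubiYoneda ≅ preadditiveYoneda :=
  Functor.isoWhiskerRight ((functorExtension₂CompWhiskeringLeftToKaroubiIso _ _).app
      preadditiveYoneda) (toKaroubiEquivalence _).inverse ≪≫
    Functor.isoWhiskerLeft preadditiveYoneda (toKaroubiEquivalence _).unitIso.symm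

lemma karoubiYoneda_obj_isFinitelyPresented (P : Karoubi A) :
    IsFinitelyPresentedFunctor (karoubiYoneda.obj P) :=
  .of_retract <| ((Karoubi.retract P).map karoubiYoneda).trans
    (Retract.ofIso (toKaroubiCompKaroubiYonedaIso.app P.X))

noncomputable def fpKaroubiYoneda : Karoubi A ⥤ FpFunctor A :=
  ObjectProperty.lift _ karoubiYoneda karoubiYoneda_obj_isFinitelyPresented

noncomputable def fullyFaithfulFpKaroubiYoneda : (fpKaroubiYoneda (A := A)).FullyFaithful :=
  .ofCompFaithful (G := ObjectProperty.ι _) fullyFaithfulKaroubiYoneda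

noncomputable def toKaroubiCompFpKaroubiYonedaIso : toKaroubi A ⋙ fpKaroubiYoneda ≅ fpYoneda :=
  Functor.fullyFaithfulCancelRight (ObjectProperty.ι _) toKaroubiCompKaroubiYonedaIso

lemma projective_fpKaroubiYoneda_obj [HasBinaryBiproducts A] (P : Karoubi A) :
    Projective (fpKaroubiYoneda.obj P) :=
  have := FpFunctor.projective_fpYoneda_obj P.X
  (((Karoubi.retract P).map fpKaroubiYoneda).trans
    (Retract.ofIso (toKaroubiCompFpKaroubiYonedaIso.app P.X))).projective

noncomputable def karoubiEquivFpProjectives [HasBinaryBiproducts A] :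
    Karoubi A ≌ ObjectProperty.FullSubcategory (fun P : FpFunctor A => Projective P) :=
  let F := ObjectProperty.lift _ fpKaroubiYoneda projective_fpKaroubiYoneda_obj
  have hF : F.FullyFaithful :=
    .ofCompFaithful (G := ObjectProperty.ι _) fullyFaithfulFpKaroubiYoneda
  have : F.Full := hF.full
  have : F.Faithful := hF.faithful
  have : F.EssSurj := ⟨fun T => by
    have := T.property
    obtain ⟨Y, ⟨h⟩⟩ := FpFunctor.exists_retract_fpYoneda_obj T.obj
    obtain ⟨P, ⟨e⟩⟩ := essImage_of_retract_obj_toKaroubi fullyFaithfulFpKaroubiYoneda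
      (h.trans (Retract.ofIso (toKaroubiCompFpKaroubiYonedaIso.app Y).symm))
    exact ⟨P, ⟨(ObjectProperty.fullyFaithfulι _).preimageIso e⟩⟩⟩
  have : F.IsEquivalence := { }
  F.asEquivalence

end KaroubiYoneda

theorem karoubi_equiv_projectives_of_fp_general
    [Preadditive A] [HasFiniteBiproducts A] :
    ∃ E : Idempotents.Karoubi A ≌
        ObjectProperty.FullSubcategory (fun P : ObjectProperty.FullSubcategory
          (fun F : Aᵒᵖ ⥤ AddCommGrpCat.{v} => IsFinitelyPresentedFunctor F) =>
            Projective P),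
      Nonempty ((Idempotents.toKaroubi A ⋙ E.functor ⋙ ObjectProperty.ι _) ≅
        fpYoneda) :=
  have := hasBinaryBiproducts_of_finite_biproducts A
  ⟨karoubiEquivFpProjectives, ⟨toKaroubiCompFpKaroubiYonedaIso⟩⟩

/-- If `A` is an additive category with weak kernels, the Yoneda embedding
`X ↦ Hom_A(−, X)` identifies the idempotent completion (Karoubi envelope) of `A` with
the full subcategory of projective objects of the abelian category `Fp(Aᵒᵖ, Ab)`. -/
theorem karoubi_equiv_projectives_of_fp
    [Preadditive A] [HasFiniteBiproducts A]
    (hwk : ∀ ⦃Y Z : A⦄ (β : Y ⟶ Z), ∃ (X : A) (α : X ⟶ Y),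
      α ≫ β = 0 ∧ ∀ (W : A) (γ : W ⟶ Y), γ ≫ β = 0 → ∃ δ : W ⟶ X, δ ≫ α = γ) :
    ∃ E : Idempotents.Karoubi A ≌
        ObjectProperty.FullSubcategory (fun P : ObjectProperty.FullSubcategory
          (fun F : Aᵒᵖ ⥤ AddCommGrpCat.{v} => IsFinitelyPresentedFunctor F) =>
            Projective P),
      Nonempty ((Idempotents.toKaroubi A ⋙ E.functor ⋙ ObjectProperty.ι _) ≅
        fpYoneda) :=
  karoubi_equiv_projectives_of_fp_general

end Stmt12
end

section
/- Let A be an additive category, C a full subcategory, and coind_C : (C^op, Ab) → (A^op, Ab) the functor defined by (coind_C I)(X) = Hom(Hom_A(−, X)|_C, I). Let F : A^op → Ab be an additive functor and η : F → coind_C I a morphism with restricted morphism η̄ : F|_C → I (under the adjunction isomorphism). If H = Ker η̄ ⊆ F|_C, then Ker η = F_H, where F_H(X) = ⋂_{α : C → X, C ∈ C} F(α)^{-1}(H(C)). -/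
open CategoryTheory Opposite

universe v u

section Stmt17

variable {A : Type u} [Category.{v} A] [Preadditive A] [Limits.HasFiniteBiproducts A]
variable (𝒞 : Set A)

/-- The restriction `Hom_A(−, X)|_𝒞` of the representable functor to the full
subcategory `𝒞`. -/
def restYoneda (X : A) : (ObjectProperty.FullSubcategory fun Y : A => Y ∈ 𝒞)ᵒᵖ ⥤ AddCommGrpCat.{v} :=
  (ObjectProperty.ι _).op ⋙ preadditiveYoneda.obj X

/-- The morphism `Hom_A(−, X)|_𝒞 ⟶ Hom_A(−, Y)|_𝒞` induced by `f : X ⟶ Y`. -/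
def restYonedaMap {X Y : A} (f : X ⟶ Y) : restYoneda 𝒞 X ⟶ restYoneda 𝒞 Y :=
  Functor.whiskerLeft (ObjectProperty.ι _).op (preadditiveYoneda.map f)

end Stmt17

section

variable {A : Type u} [Category.{v} A] [Preadditive A]
variable {𝒞 : Set A} {I : (ObjectProperty.FullSubcategory fun Y : A => Y ∈ 𝒞)ᵒᵖ ⥤ AddCommGrpCat.{v}}

lemma restYonedaMap_comp_app_id {X c : A} (hc : c ∈ 𝒞) (α : c ⟶ X) (φ : restYoneda 𝒞 X ⟶ I) :
    (restYonedaMap 𝒞 α ≫ φ).app (op ⟨c, hc⟩) (𝟙 c) = φ.app (op ⟨c, hc⟩) α :=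
  congrArg (φ.app (op ⟨c, hc⟩)).hom (Category.id_comp α)

lemma restYoneda_hom_eq_zero_iff {X : A} (φ : restYoneda 𝒞 X ⟶ I) :
    φ = 0 ↔ ∀ (c : A) (hc : c ∈ 𝒞) (α : c ⟶ X), φ.app (op ⟨c, hc⟩) α = 0 := by
  refine ⟨fun h c hc α => by rw [h]; rfl, fun h => ?_⟩
  ext ⟨c, hc⟩ (α : c ⟶ X)
  exact h c hc α

end

section Stmt17

variable {A : Type u} [Category.{v} A] [Preadditive A] [Limits.HasFiniteBiproducts A]
variable (𝒞 : Set A)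

/-- Here `η : F ⟶ coind_𝒞 I` is given by its components together with their naturality `hnat`,
and the restricted morphism is `η̄_c(x) = (η_c x)(𝟙 c)`. -/
theorem ker_eq_determined_subfunctor
    (F : Aᵒᵖ ⥤ AddCommGrpCat.{v})
    (I : (ObjectProperty.FullSubcategory fun Y : A => Y ∈ 𝒞)ᵒᵖ ⥤ AddCommGrpCat.{v})
    (η : ∀ X : A, F.obj (op X) →+ (restYoneda 𝒞 X ⟶ I))
    (hnat : ∀ ⦃X Y : A⦄ (f : X ⟶ Y) (y : F.obj (op Y)),
      η X (F.map f.op y) = restYonedaMap 𝒞 f ≫ η Y y) :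
    ∀ (X : A) (x : F.obj (op X)),
      η X x = 0 ↔
        ∀ (c : A) (hc : c ∈ 𝒞) (α : c ⟶ X),
          (η c (F.map α.op x)).app (op ⟨c, hc⟩) (𝟙 c) = 0 := by
  intro X x
  simp only [hnat, restYonedaMap_comp_app_id]
  exact restYoneda_hom_eq_zero_iff (η X x)

end Stmt17
end

section
/- Let A be a locally finitely presented additive category and let β : Y → Z be a morphism in A that admits a kernel α : X → Y with X pure-injective. Then β is right determined by the class fp A of finitely presented objects: every morphism β' : Y' → Z such that Im Hom_A(C, β') ⊆ Im Hom_A(C, β) for all finitely presented C factors through β. -/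
/-!
Write `Y' = colim D j` as a filtered colimit of finitely presented objects. Each `c j ≫ β'` lifts
through `β` to some `h j : D j ⟶ Y`, and the failures `h j - D f ≫ h j'` of compatibility lie in
the kernel `X`, so they form a 1-cocycle `δ` of the diagram `D` with values in `X`. Twisting the
biproducts `X ⊞ D j` by `δ` yields, in the colimit, a sequence `X ⟶ E ⟶ Y'` which is pure-exact
because `Hom(C, -)` commutes with filtered colimits for finitely presented `C`. As `X` is
pure-injective it splits, so `δ` is a coboundary `δ f = t j - D f ≫ t j'`, and the corrected
lifts `h j - t j ≫ α` are compatible; they glue to the required `φ : Y' ⟶ Y`.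
-/

open CategoryTheory Limits Opposite

universe v u

section Stmt14

variable {A : Type u} [Category.{v} A]

/-- An object `X` is finitely presented if `Hom_A(X, −)` preserves filtered colimits. -/
def IsFP (X : A) : Prop :=
  ∀ (J : Type v) [SmallCategory J] [IsFiltered J],
    Nonempty (PreservesColimitsOfShape J (coyoneda.obj (op X)))

/-- A presentation of `X` as a filtered colimit of finitely presented objects. -/
structure FilteredFpPresentation (X : A) where
  J : Type v
  [cat : SmallCategory J]
  [filt : IsFiltered J]
  D : J ⥤ A
  c : Cocone D
  fp : ∀ j : J, IsFP (D.obj j)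
  isColimit : IsColimit c
  pt_eq : c.pt = X

/-- `A` is locally finitely presented: it has filtered colimits, the finitely
presented objects form an essentially small full subcategory, and every object is a
filtered colimit of finitely presented objects. -/
def LocallyFinitelyPresented (A : Type u) [Category.{v} A] : Prop :=
  (∀ (J : Type v) [SmallCategory J] [IsFiltered J], HasColimitsOfShape J A) ∧
    EssentiallySmall.{v} (ObjectProperty.FullSubcategory (fun X : A => IsFP X)) ∧
    (∀ X : A, Nonempty (FilteredFpPresentation X))

variable [Preadditive A]

/-- A composable pair `f : X ⟶ Y`, `g : Y ⟶ Z` is a pure-exact sequence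
`0 → X → Y → Z → 0` if `Hom_A(C, −)` carries it to a short exact sequence of abelian
groups for every finitely presented `C`. -/
def IsPureExact {X Y Z : A} (f : X ⟶ Y) (g : Y ⟶ Z) : Prop :=
  ∀ C : A, IsFP C →
    (∀ h : C ⟶ X, h ≫ f = 0 → h = 0) ∧
    (∀ h : C ⟶ Y, h ≫ g = 0 → ∃ k : C ⟶ X, k ≫ f = h) ∧
    (∀ h : C ⟶ Z, ∃ k : C ⟶ Y, k ≫ g = h)

/-- An object `X` is pure-injective if every pure-exact sequence `0 → X → Y → Z → 0`
splits. -/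
def IsPureInjective (X : A) : Prop :=
  ∀ ⦃Y Z : A⦄ (f : X ⟶ Y) (g : Y ⟶ Z), IsPureExact f g → ∃ r : Y ⟶ X, f ≫ r = 𝟙 X

end Stmt14

section FinitelyPresented

variable {A : Type u} [Category.{v} A]
variable {J : Type v} [SmallCategory J] [IsFiltered J] {D : J ⥤ A} {c : Cocone D} {C : A}

theorem IsFP.exists_comp_ι_eq (hC : IsFP C) (hc : IsColimit c) (g : C ⟶ c.pt) :
    ∃ (j : J) (u : C ⟶ D.obj j), u ≫ c.ι.app j = g := by
  obtain ⟨_⟩ := hC J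
  exact Types.jointly_surjective _ (isColimitOfPreserves (coyoneda.obj (op C)) hc) g

theorem IsFP.exists_comp_map_eq_zero [Preadditive A] (hC : IsFP C) (hc : IsColimit c) {j : J}
    (u : C ⟶ D.obj j) (hu : u ≫ c.ι.app j = 0) : ∃ (k : J) (f : j ⟶ k), u ≫ D.map f = 0 := by
  obtain ⟨_⟩ := hC J
  obtain ⟨k, f, hf⟩ := (Types.FilteredColimit.isColimit_eq_iff'
    (isColimitOfPreserves (coyoneda.obj (op C)) hc) u (0 : C ⟶ D.obj j)).mp (by simpa using hu)
  exact ⟨k, f, by simpa using hf⟩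

end FinitelyPresented

section Cocycle

variable {A : Type u} [Category.{v} A] [Preadditive A]
variable {J : Type v} [SmallCategory J] {D : J ⥤ A} {X : A}

def IsCocycle (D : J ⥤ A) (X : A) (δ : ∀ ⦃j j' : J⦄, (j ⟶ j') → (D.obj j ⟶ X)) : Prop :=
  ∀ ⦃j j' j'' : J⦄ (f : j ⟶ j') (g : j' ⟶ j''), δ (f ≫ g) = δ f + D.map f ≫ δ g

variable {δ : ∀ ⦃j j' : J⦄, (j ⟶ j') → (D.obj j ⟶ X)}

theorem IsCocycle.map_id (hδ : IsCocycle D X δ) (j : J) : δ (𝟙 j) = 0 := by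
  simpa using hδ (𝟙 j) (𝟙 j)

theorem IsCocycle.of_comp_mono {Y : A} {α : X ⟶ Y} [Mono α] {h : ∀ j, D.obj j ⟶ Y}
    (hδ : ∀ ⦃j j' : J⦄ (f : j ⟶ j'), δ f ≫ α = h j - D.map f ≫ h j') : IsCocycle D X δ := by
  intro j j' j'' f g
  rw [← cancel_mono α]
  simp only [Preadditive.add_comp, Category.assoc, hδ, Functor.map_comp, Preadditive.comp_sub]
  abel

theorem map_comp_sub_eq_of_coboundary {Y : A} {α : X ⟶ Y} {h : ∀ j, D.obj j ⟶ Y}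
    {t : ∀ j, D.obj j ⟶ X} (hδα : ∀ ⦃j j' : J⦄ (f : j ⟶ j'), δ f ≫ α = h j - D.map f ≫ h j')
    (hδt : ∀ ⦃j j' : J⦄ (f : j ⟶ j'), δ f = t j - D.map f ≫ t j') {j j' : J} (f : j ⟶ j') :
    D.map f ≫ (h j' - t j' ≫ α) = h j - t j ≫ α := by
  have e := hδα f
  rw [hδt f, Preadditive.sub_comp, Category.assoc] at e
  rw [Preadditive.comp_sub]
  linear_combination (norm := abel) e

variable [HasBinaryBiproducts A] (hδ : IsCocycle D X δ)

@[reducible]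
noncomputable def IsCocycle.extension : J ⥤ A where
  obj j := X ⊞ D.obj j
  map f := biprod.map (𝟙 X) (D.map f) + biprod.snd ≫ δ f ≫ biprod.inl
  map_id j := by ext <;> simp [hδ.map_id]
  map_comp f g := by ext <;> simp [hδ f g]

@[simps]
noncomputable def IsCocycle.extensionSnd : hδ.extension ⟶ D where
  app _ := biprod.snd

variable [HasColimitsOfShape J A] [IsFiltered J]

noncomputable def IsCocycle.extensionInl : X ⟶ colimit hδ.extension :=
  biprod.inl ≫ colimit.ι hδ.extension (IsFiltered.nonempty (C := J)).some

@[simp]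
theorem IsCocycle.inl_comp_colimit_ι (j : J) :
    biprod.inl ≫ colimit.ι hδ.extension j = hδ.extensionInl := by
  have := IsFiltered.isConnected J
  refine constant_of_preserves_morphisms (fun j => biprod.inl ≫ colimit.ι hδ.extension j)
    (fun j j' f => ?_) j (IsFiltered.nonempty (C := J)).some
  simp [← colimit.w hδ.extension f]

theorem IsCocycle.isPureExact_extension {c : Cocone D} (hc : IsColimit c) :
    IsPureExact hδ.extensionInl (colimit.desc _ ((Cocone.precompose hδ.extensionSnd).obj c)) := by
  intro C hC
  refine ⟨fun u hu => ?_, fun u hu => ?_, fun g => ?_⟩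
  · obtain ⟨j⟩ := IsFiltered.nonempty (C := J)
    obtain ⟨k, f, hf⟩ := hC.exists_comp_map_eq_zero (colimit.isColimit hδ.extension)
      (u ≫ biprod.inl : C ⟶ X ⊞ D.obj j) (by simpa using hu)
    simpa using hf =≫ biprod.fst
  · obtain ⟨j, v, rfl⟩ := hC.exists_comp_ι_eq (colimit.isColimit hδ.extension) u
    obtain ⟨k, f, hf⟩ := hC.exists_comp_map_eq_zero hc (v ≫ biprod.snd) (by simpa using hu)
    rw [Category.assoc] at hf
    have hv : v ≫ hδ.extension.map f = (v ≫ (biprod.fst + biprod.snd ≫ δ f)) ≫ biprod.inl := by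
      ext <;> simp [hf]
    refine ⟨v ≫ (biprod.fst + biprod.snd ≫ δ f), ?_⟩
    rw [← hδ.inl_comp_colimit_ι k, ← Category.assoc, ← hv, Category.assoc, colimit.w]
    rfl
  · obtain ⟨j, u, rfl⟩ := hC.exists_comp_ι_eq hc g
    exact ⟨u ≫ biprod.inr ≫ colimit.ι hδ.extension j, by simp⟩

theorem IsPureInjective.exists_coboundary (hX : IsPureInjective X) (hδ : IsCocycle D X δ)
    {c : Cocone D} (hc : IsColimit c) :
    ∃ t : ∀ j, D.obj j ⟶ X, ∀ ⦃j j' : J⦄ (f : j ⟶ j'), δ f = t j - D.map f ≫ t j' := by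
  obtain ⟨r, hr⟩ := hX _ _ (hδ.isPureExact_extension hc)
  refine ⟨fun j => biprod.inr ≫ colimit.ι hδ.extension j ≫ r, fun j j' f => ?_⟩
  have hinr : biprod.inr ≫ colimit.ι hδ.extension j =
      D.map f ≫ biprod.inr ≫ colimit.ι hδ.extension j' + δ f ≫ hδ.extensionInl := by
    simp [← colimit.w hδ.extension f]
  simp [reassoc_of% hinr, hr]

end Cocycle

section RightDetermined

variable {A : Type u} [Category.{v} A] [Preadditive A]

/-- In a locally finitely presented additive category, a morphism `β : Y ⟶ Z` with a
pure-injective kernel is right determined by the finitely presented objects: every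
`β' : Y' ⟶ Z` with `Im Hom_A(C, β') ⊆ Im Hom_A(C, β)` for all finitely presented `C`
factors through `β`. -/
theorem rightDetermined_of_pureInjective_kernel
    [HasFiniteBiproducts A]
    (hA : LocallyFinitelyPresented A)
    {X Y Z : A} (β : Y ⟶ Z) (α : X ⟶ Y)
    -- `α` is a kernel of `β`
    (hker : α ≫ β = 0 ∧ ∀ (W : A) (γ : W ⟶ Y), γ ≫ β = 0 → ∃! δ : W ⟶ X, δ ≫ α = γ)
    -- `X` is pure-injective
    (hpi : IsPureInjective X) :
    ∀ (Y' : A) (β' : Y' ⟶ Z),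
      (∀ C : A, IsFP C → ∀ g : C ⟶ Y', ∃ h : C ⟶ Y, h ≫ β = g ≫ β') →
      ∃ φ : Y' ⟶ Y, φ ≫ β = β' := by
  obtain ⟨hαβ, hlift⟩ := hker
  obtain ⟨hcolim, -, hpres⟩ := hA
  have : Mono α := ⟨fun u v huv => (hlift _ (v ≫ α) (by simp [hαβ])).unique huv rfl⟩
  intro Y' β' hfac
  obtain ⟨⟨J, D, c, hfp, hc, rfl⟩⟩ := hpres Y'
  have := hcolim J
  have : HasBinaryBiproducts A := hasBinaryBiproducts_of_finite_biproducts A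
  choose h hh using fun j => hfac _ (hfp j) (c.ι.app j)
  choose δ hδ using fun j j' (f : j ⟶ j') =>
    (hlift _ (h j - D.map f ≫ h j') (by simp [hh])).exists
  obtain ⟨t, ht⟩ := hpi.exists_coboundary (IsCocycle.of_comp_mono (h := h) hδ) hc
  let φ : Cocone D :=
    { pt := Y
      ι :=
        { app j := h j - t j ≫ α
          naturality j j' f := by
            simpa using map_comp_sub_eq_of_coboundary (h := h) hδ ht f } }
  exact ⟨hc.desc φ, hc.hom_ext fun j => by simp [φ, hh, hαβ]⟩

end RightDetermined
end
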